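/- arXiv:1704.04833 — 2 statements merged into one kernel-verified Lean document; each statement's English description precedes it below -/
import Mathlib

section
/- Let K = [[P, Q],[Qᵀ, R]] be symmetric positive semidefinite and let 0 ≤ ζ ≤ 1. Then P − Q R⁺ Qᵀ ⪰ ζ P if and only if R − Qᵀ P⁺ Q ⪰ ζ R, where ⪰ denotes the Loewner order and M⁺ the Moore–Penrose pseudoinverse. -/
/-!
Positivity of `K` gives `ker R ⊆ ker Q`, so `Q = Q R⁺ R` for any generalized inverse
(`R R⁺ R = R`). Then the quadratic form of `Q R⁺ Qᵀ` at `x` is `sup_y (xᵀ Q y)² / yᵀ R y`, by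
Cauchy–Schwarz for the semi-inner product `R`. Hence `P − Q R⁺ Qᵀ ⪰ ζ P` says exactly that
`(xᵀ Q y)² ≤ (1 − ζ) (xᵀ P x) (yᵀ R y)` for all `x, y`, a condition symmetric in `(P, Q)` and
`(R, Qᵀ)`.
-/

open Matrix

/-- `Mplus` is the Moore–Penrose pseudoinverse of `M`. -/
def IsMoorePenrose {a b : Type*} [Fintype a] [Fintype b]
    (M : Matrix a b ℝ) (Mplus : Matrix b a ℝ) : Prop :=
  M * Mplus * M = M ∧ Mplus * M * Mplus = Mplus ∧
    (M * Mplus)ᵀ = M * Mplus ∧ (Mplus * M)ᵀ = Mplus * M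

open scoped ComplexOrder

namespace Matrix

section Blocks

variable {m n α : Type*} [Ring α] [PartialOrder α] [StarRing α]
  {A : Matrix m m α} {B : Matrix m n α} {C : Matrix n m α} {D : Matrix n n α}

theorem PosSemidef.of_fromBlocks₁₁ (hK : (fromBlocks A B C D).PosSemidef) : A.PosSemidef :=
  hK.submatrix Sum.inl

theorem PosSemidef.of_fromBlocks₂₂ (hK : (fromBlocks A B C D).PosSemidef) : D.PosSemidef :=
  hK.submatrix Sum.inr

theorem PosSemidef.fromBlocks_swap (hK : (fromBlocks A B C D).PosSemidef) :
    (fromBlocks D C B A).PosSemidef := by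
  simpa only [fromBlocks_submatrix_sum_swap_sum_swap] using hK.submatrix Sum.swap

end Blocks

variable {m n 𝕜 : Type*} [Fintype m] [Fintype n] [RCLike 𝕜]

theorem PosSemidef.mulVec_eq_zero_of_fromBlocks {A : Matrix m m 𝕜} {B : Matrix m n 𝕜}
    {C : Matrix n m 𝕜} {D : Matrix n n 𝕜} (hK : (fromBlocks A B C D).PosSemidef)
    {y : n → 𝕜} (hy : D *ᵥ y = 0) : B *ᵥ y = 0 := by
  have hv : fromBlocks A B C D *ᵥ Sum.elim 0 y = 0 := by
    rw [← hK.dotProduct_mulVec_zero_iff]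
    simp [fromBlocks_mulVec, hy, dotProduct, Fintype.sum_sum_type]
  simpa [fromBlocks_mulVec] using congrArg (· ∘ Sum.inl) hv

theorem PosSemidef.mul_mul_eq_of_fromBlocks {A : Matrix m m 𝕜} {B : Matrix m n 𝕜}
    {C : Matrix n m 𝕜} {D G : Matrix n n 𝕜} (hK : (fromBlocks A B C D).PosSemidef)
    (hG : D * G * D = D) : B * G * D = B := by
  refine ext_iff_mulVec.2 fun v => ?_
  have hD : D *ᵥ ((G * D) *ᵥ v - v) = 0 := by
    rw [mulVec_sub, mulVec_mulVec, ← Matrix.mul_assoc, hG, sub_self]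
  rw [← sub_eq_zero, Matrix.mul_assoc, ← mulVec_mulVec, ← mulVec_sub]
  exact hK.mulVec_eq_zero_of_fromBlocks hD

theorem PosSemidef.dotProduct_mulVec_sq_le {S : Matrix n n ℝ} (hS : S.PosSemidef) (u v : n → ℝ) :
    (u ⬝ᵥ S *ᵥ v) ^ 2 ≤ (u ⬝ᵥ S *ᵥ u) * (v ⬝ᵥ S *ᵥ v) := by
  classical
  have hsymm : v ⬝ᵥ S *ᵥ u = u ⬝ᵥ S *ᵥ v := by
    rw [dotProduct_mulVec, ← mulVec_transpose, dotProduct_comm,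
      ← conjTranspose_eq_transpose_of_trivial, hS.1]
  have := LinearMap.BilinForm.apply_mul_apply_le_of_forall_zero_le (toLinearMap₂' ℝ S)
    (fun x => by simpa [toLinearMap₂'_apply'] using hS.dotProduct_mulVec_nonneg x) u v
  simpa only [toLinearMap₂'_apply', hsymm, sq] using this

theorem PosSemidef.forall_sq_dotProduct_mulVec_le_iff {S : Matrix n n ℝ} (hS : S.PosSemidef)
    (u : n → ℝ) {c : ℝ} (hc : 0 ≤ c) :
    (∀ y, (u ⬝ᵥ S *ᵥ y) ^ 2 ≤ c * (y ⬝ᵥ S *ᵥ y)) ↔ u ⬝ᵥ S *ᵥ u ≤ c := by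
  have hu : 0 ≤ u ⬝ᵥ S *ᵥ u := by simpa using hS.dotProduct_mulVec_nonneg u
  constructor
  · intro h
    rcases hu.eq_or_lt with h0 | hpos
    · exact h0 ▸ hc
    · exact le_of_mul_le_mul_right (by simpa only [sq] using h u) hpos
  · intro h y
    have hy : 0 ≤ y ⬝ᵥ S *ᵥ y := by simpa using hS.dotProduct_mulVec_nonneg y
    calc (u ⬝ᵥ S *ᵥ y) ^ 2 ≤ (u ⬝ᵥ S *ᵥ u) * (y ⬝ᵥ S *ᵥ y) := hS.dotProduct_mulVec_sq_le u y
      _ ≤ c * (y ⬝ᵥ S *ᵥ y) := mul_le_mul_of_nonneg_right h hy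

theorem posSemidef_sub_mul_mul_transpose_sub_smul_iff {P : Matrix m m ℝ} {Q : Matrix m n ℝ}
    {R G : Matrix n n ℝ} (hP : P.PosSemidef) (hR : R.PosSemidef) (hG : R * G * R = R)
    (hQ : Q * G * R = Q) {ζ : ℝ} (hζ : ζ ≤ 1) :
    ((P - Q * G * Qᵀ) - ζ • P).PosSemidef ↔
      ∀ x y, (x ⬝ᵥ Q *ᵥ y) ^ 2 ≤ (1 - ζ) * (x ⬝ᵥ P *ᵥ x) * (y ⬝ᵥ R *ᵥ y) := by
  set W := (Q * G)ᵀ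
  have hRt : Rᵀ = R := (by simpa using hR.1 : R.IsSymm).eq
  have hQW : Q = Wᵀ * R := by rw [transpose_transpose, hQ]
  have hQGQ : Q * G * Qᵀ = Wᵀ * R * W := by
    calc Q * G * Qᵀ = Q * G * R * G * (Q * G * R)ᵀ := by rw [hQ]
    _ = Wᵀ * (R * G * R) * W := by
      simp only [W, transpose_mul, transpose_transpose, hRt, Matrix.mul_assoc]
    _ = Wᵀ * R * W := by rw [hG]
  have hbilin : ∀ x y, x ⬝ᵥ (Wᵀ * R) *ᵥ y = (W *ᵥ x) ⬝ᵥ R *ᵥ y := fun x y => by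
    rw [← mulVec_mulVec, dotProduct_mulVec, vecMul_transpose]
  have hform : ∀ x, x ⬝ᵥ ((P - Q * G * Qᵀ) - ζ • P) *ᵥ x
      = (1 - ζ) * (x ⬝ᵥ P *ᵥ x) - (W *ᵥ x) ⬝ᵥ R *ᵥ (W *ᵥ x) := fun x => by
    simp only [hQGQ, sub_mulVec, smul_mulVec, dotProduct_sub, dotProduct_smul, smul_eq_mul]
    rw [← mulVec_mulVec, hbilin]
    ring
  have hherm : ((P - Q * G * Qᵀ) - ζ • P).IsHermitian := by
    have hWRW : (Wᵀ * R * W).IsHermitian := by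
      simpa using (hR.conjTranspose_mul_mul_same W).1
    rw [hQGQ]
    exact (hP.1.sub hWRW).sub (hP.1.smul (IsSelfAdjoint.all ζ))
  have hc : ∀ x, 0 ≤ (1 - ζ) * (x ⬝ᵥ P *ᵥ x) := fun x =>
    mul_nonneg (sub_nonneg.2 hζ) (by simpa using hP.dotProduct_mulVec_nonneg x)
  simp only [posSemidef_iff_dotProduct_mulVec, hherm, true_and, star_trivial, hform, sub_nonneg]
  refine forall_congr' fun x => ?_
  simp only [hQW, hbilin]
  exact (hR.forall_sq_dotProduct_mulVec_le_iff _ (hc x)).symm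

end Matrix

theorem schur_complement_loewner_iff_general {a b : ℕ}
    (P : Matrix (Fin a) (Fin a) ℝ) (Q : Matrix (Fin a) (Fin b) ℝ)
    (R : Matrix (Fin b) (Fin b) ℝ)
    (Pplus : Matrix (Fin a) (Fin a) ℝ) (Rplus : Matrix (Fin b) (Fin b) ℝ)
    (hK : (Matrix.fromBlocks P Q Qᵀ R).PosSemidef)
    (hP : IsMoorePenrose P Pplus) (hR : IsMoorePenrose R Rplus)
    (ζ : ℝ) (hζ1 : ζ ≤ 1) :
    ((P - Q * Rplus * Qᵀ) - ζ • P).PosSemidef ↔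
      ((R - Qᵀ * Pplus * Q) - ζ • R).PosSemidef := by
  have hPpsd := hK.of_fromBlocks₁₁
  have hRpsd := hK.of_fromBlocks₂₂
  have hRQ := posSemidef_sub_mul_mul_transpose_sub_smul_iff hRpsd hPpsd hP.1
    (hK.fromBlocks_swap.mul_mul_eq_of_fromBlocks hP.1) hζ1
  rw [transpose_transpose] at hRQ
  rw [posSemidef_sub_mul_mul_transpose_sub_smul_iff hPpsd hRpsd hR.1
    (hK.mul_mul_eq_of_fromBlocks hR.1) hζ1, hRQ, forall_comm]
  refine forall₂_congr fun x y => ?_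
  rw [dotProduct_mulVec x Qᵀ, vecMul_transpose, dotProduct_comm (Q *ᵥ x), mul_right_comm]

/-- For a PSD block matrix `K = [[P, Q],[Qᵀ, R]]` and `0 ≤ ζ ≤ 1`,
`P − Q R⁺ Qᵀ ⪰ ζ P` iff `R − Qᵀ P⁺ Q ⪰ ζ R`. -/
theorem schur_complement_loewner_iff {a b : ℕ}
    (P : Matrix (Fin a) (Fin a) ℝ) (Q : Matrix (Fin a) (Fin b) ℝ)
    (R : Matrix (Fin b) (Fin b) ℝ)
    (Pplus : Matrix (Fin a) (Fin a) ℝ) (Rplus : Matrix (Fin b) (Fin b) ℝ)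
    (hK : (Matrix.fromBlocks P Q Qᵀ R).PosSemidef)
    (hP : IsMoorePenrose P Pplus) (hR : IsMoorePenrose R Rplus)
    (ζ : ℝ) (hζ0 : 0 ≤ ζ) (hζ1 : ζ ≤ 1) :
    ((P - Q * Rplus * Qᵀ) - ζ • P).PosSemidef ↔
      ((R - Qᵀ * Pplus * Q) - ζ • R).PosSemidef :=
  schur_complement_loewner_iff_general P Q R Pplus Rplus hK hP hR ζ hζ1
end

section
/- Let ℓ(β,γ) be a convex quadratic function on ℝ^{p+m} with Hessian H, and let the Split LBI iterations satisfy β_{k+1} = β_k − κα∇_β ℓ(β_k,γ_k), ρ_{k+1} + γ_{k+1}/κ = ρ_k + γ_k/κ − α∇_γ ℓ(β_k,γ_k) with ρ_k ∈ ∂‖γ_k‖₁ for all k, where κ, α > 0. If κα‖H‖₂ ≤ 2, then ℓ(β_{k+1},γ_{k+1}) ≤ ℓ(β_k,γ_k) for all k. -/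
open Matrix

/-- Euclidean operator norm of a real matrix. -/
noncomputable def matOpNorm {a b : Type*} [Fintype a] [Fintype b] [DecidableEq b]
    (M : Matrix a b ℝ) : ℝ :=
  ‖LinearMap.toContinuousLinearMap (Matrix.toEuclideanLin M)‖

/-- `ρ ∈ ∂‖γ‖₁`. -/
def IsL1Subgradient {m : ℕ} (ρ γ : Fin m → ℝ) : Prop :=
  ∀ j, (γ j ≠ 0 → ρ j = Real.sign (γ j)) ∧ |ρ j| ≤ 1

/-!
Write `c = κα` and `d = (β_{k+1} - β_k, γ_{k+1} - γ_k)`. The β-update gives `d_β = -c ∇_β ℓ`, and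
the γ-update gives `d_γ + κ (ρ_{k+1} - ρ_k) = -c ∇_γ ℓ`; since `∂‖·‖₁` is monotone,
`(ρ_{k+1} - ρ_k) ⬝ d_γ ≥ 0`, so in both blocks `c ∇ℓ ⬝ d ≤ -‖d‖²`. The exact Taylor expansion of
the quadratic loss then gives
`c (ℓ_{k+1} - ℓ_k) = c ∇ℓ ⬝ d + (c/2) dᵀHd ≤ (c‖H‖₂/2 - 1) ‖d‖² ≤ 0`.
-/

lemma dotProduct_mulVec_le_matOpNorm_mul {n : Type*} [Fintype n] [DecidableEq n]
    (M : Matrix n n ℝ) (x : n → ℝ) :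
    x ⬝ᵥ M *ᵥ x ≤ matOpNorm M * (x ⬝ᵥ x) := by
  set A := LinearMap.toContinuousLinearMap (Matrix.toEuclideanLin M)
  set X : EuclideanSpace ℝ n := WithLp.toLp 2 x
  have hinner : x ⬝ᵥ M *ᵥ x = inner ℝ X (A X) := by
    rw [EuclideanSpace.inner_eq_star_dotProduct, dotProduct_comm]; rfl
  have hnorm : ‖X‖ ^ 2 = x ⬝ᵥ x := by
    rw [← real_inner_self_eq_norm_sq, EuclideanSpace.inner_eq_star_dotProduct]; rfl
  calc x ⬝ᵥ M *ᵥ x = inner ℝ X (A X) := hinner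
    _ ≤ ‖X‖ * ‖A X‖ := real_inner_le_norm X (A X)
    _ ≤ ‖X‖ * (‖A‖ * ‖X‖) := by gcongr; exact A.le_opNorm X
    _ = matOpNorm M * (x ⬝ᵥ x) := by rw [← hnorm, matOpNorm]; ring

lemma mul_eq_abs_of_eq_sign {r x : ℝ} (h : x ≠ 0 → r = Real.sign x) : r * x = |x| := by
  rcases lt_trichotomy x 0 with hx | rfl | hx
  · rw [h hx.ne, Real.sign_of_neg hx, abs_of_neg hx, neg_one_mul]
  · simp
  · rw [h hx.ne', Real.sign_of_pos hx, abs_of_pos hx, one_mul]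

lemma mul_le_abs_of_abs_le_one {r : ℝ} (x : ℝ) (h : |r| ≤ 1) : r * x ≤ |x| :=
  calc r * x ≤ |r| * |x| := by rw [← abs_mul]; exact le_abs_self _
    _ ≤ |x| := mul_le_of_le_one_left (abs_nonneg x) h

lemma IsL1Subgradient.dotProduct_sub_nonneg {m : ℕ} {ρ γ ρ' γ' : Fin m → ℝ}
    (h : IsL1Subgradient ρ γ) (h' : IsL1Subgradient ρ' γ') :
    0 ≤ (ρ' - ρ) ⬝ᵥ (γ' - γ) := by
  refine Finset.sum_nonneg fun j _ => ?_
  have hργ := mul_eq_abs_of_eq_sign (h j).1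
  have hρ'γ' := mul_eq_abs_of_eq_sign (h' j).1
  have hρ'γ := mul_le_abs_of_abs_le_one (γ j) (h' j).2
  have hργ' := mul_le_abs_of_abs_le_one (γ' j) (h j).2
  simp only [Pi.sub_apply]
  nlinarith

lemma mul_dotProduct_le_neg_dotProduct_self {n : Type*} [Fintype n] {c κ : ℝ} {g r d : n → ℝ}
    (hκ : 0 ≤ κ) (hd : d + κ • r = -(c • g)) (hrd : 0 ≤ r ⬝ᵥ d) :
    c * (g ⬝ᵥ d) ≤ -(d ⬝ᵥ d) := by
  have hg : c • g = -(d + κ • r) := by rw [hd, neg_neg]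
  have : c * (g ⬝ᵥ d) = -(d ⬝ᵥ d) - κ * (r ⬝ᵥ d) := by
    rw [← smul_eq_mul, ← smul_dotProduct, hg, neg_dotProduct, add_dotProduct, smul_dotProduct,
      smul_eq_mul, dotProduct_comm r d]
    ring
  nlinarith [mul_nonneg hκ hrd]

lemma dotProduct_add_half_dotProduct_mulVec_nonpos {n : Type*} [Fintype n] [DecidableEq n]
    {c : ℝ} {g x : n → ℝ} (H : Matrix n n ℝ) (hc : 0 < c) (hcH : c * matOpNorm H ≤ 2)
    (hgx : c * (g ⬝ᵥ x) ≤ -(x ⬝ᵥ x)) :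
    g ⬝ᵥ x + 1 / 2 * (x ⬝ᵥ H *ᵥ x) ≤ 0 := by
  have hH := dotProduct_mulVec_le_matOpNorm_mul H x
  have hx : 0 ≤ x ⬝ᵥ x := by simpa using dotProduct_star_self_nonneg x
  suffices c * (g ⬝ᵥ x + 1 / 2 * (x ⬝ᵥ H *ᵥ x)) ≤ 0 from nonpos_of_mul_nonpos_right this hc
  nlinarith [mul_le_mul_of_nonneg_left hH hc.le, mul_le_mul_of_nonneg_right hcH hx]

theorem splitLBI_loss_nonincreasing_general {p m : ℕ}
    (ℓ : (Fin p → ℝ) → (Fin m → ℝ) → ℝ)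
    (gβ : (Fin p → ℝ) → (Fin m → ℝ) → (Fin p → ℝ))
    (gγ : (Fin p → ℝ) → (Fin m → ℝ) → (Fin m → ℝ))
    (H : Matrix (Fin p ⊕ Fin m) (Fin p ⊕ Fin m) ℝ)
    (hquad : ∀ (β : Fin p → ℝ) (γ : Fin m → ℝ) (β' : Fin p → ℝ) (γ' : Fin m → ℝ),
      ℓ β' γ' = ℓ β γ + gβ β γ ⬝ᵥ (β' - β) + gγ β γ ⬝ᵥ (γ' - γ) +
        (1 / 2) * ((Sum.elim (β' - β) (γ' - γ)) ⬝ᵥ H.mulVec (Sum.elim (β' - β) (γ' - γ))))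
    (κ α : ℝ) (hκ : 0 < κ) (hα : 0 < α) (hstep : κ * α * matOpNorm H ≤ 2)
    (β : ℕ → Fin p → ℝ) (γ : ℕ → Fin m → ℝ) (ρ : ℕ → Fin m → ℝ)
    (hβ : ∀ k, β (k + 1) = β k - (κ * α) • gβ (β k) (γ k))
    (hγ : ∀ k j, ρ (k + 1) j + γ (k + 1) j / κ = ρ k j + γ k j / κ - α * gγ (β k) (γ k) j)
    (hρ : ∀ k, IsL1Subgradient (ρ k) (γ k)) :
    ∀ k, ℓ (β (k + 1)) (γ (k + 1)) ≤ ℓ (β k) (γ k) := by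
  intro k
  set g := Sum.elim (gβ (β k) (γ k)) (gγ (β k) (γ k))
  set dβ := β (k + 1) - β k
  set dγ := γ (k + 1) - γ k
  -- the plain gradient step on `β` is the case `κ = 0` of the step lemma
  have hβstep : dβ + (0 : ℝ) • (0 : Fin p → ℝ) = -((κ * α) • gβ (β k) (γ k)) := by
    simp [dβ, hβ k]
  have hγstep : dγ + κ • (ρ (k + 1) - ρ k) = -((κ * α) • gγ (β k) (γ k)) := by
    funext j
    have := hγ k j
    field_simp at this
    simp only [dγ, Pi.add_apply, Pi.sub_apply, Pi.smul_apply, Pi.neg_apply, smul_eq_mul]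
    linarith
  have hdescent : κ * α * (g ⬝ᵥ Sum.elim dβ dγ) ≤ -(Sum.elim dβ dγ ⬝ᵥ Sum.elim dβ dγ) := by
    have hβdescent := mul_dotProduct_le_neg_dotProduct_self le_rfl hβstep (by simp)
    have hγdescent := mul_dotProduct_le_neg_dotProduct_self hκ.le hγstep
      ((hρ k).dotProduct_sub_nonneg (hρ (k + 1)))
    rw [sumElim_dotProduct_sumElim, sumElim_dotProduct_sumElim]
    linarith
  have hdecrease := dotProduct_add_half_dotProduct_mulVec_nonpos H (mul_pos hκ hα) hstep hdescent
  rw [sumElim_dotProduct_sumElim] at hdecrease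
  rw [hquad (β k) (γ k) (β (k + 1)) (γ (k + 1))]
  linarith

/-- For a convex quadratic loss `ℓ` with Hessian `H`, the Split LBI iterations
with `κα‖H‖₂ ≤ 2` have non-increasing loss. -/
theorem splitLBI_loss_nonincreasing {p m : ℕ}
    (ℓ : (Fin p → ℝ) → (Fin m → ℝ) → ℝ)
    (gβ : (Fin p → ℝ) → (Fin m → ℝ) → (Fin p → ℝ))
    (gγ : (Fin p → ℝ) → (Fin m → ℝ) → (Fin m → ℝ))
    (H : Matrix (Fin p ⊕ Fin m) (Fin p ⊕ Fin m) ℝ)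
    (hHpsd : H.PosSemidef)
    (hquad : ∀ (β : Fin p → ℝ) (γ : Fin m → ℝ) (β' : Fin p → ℝ) (γ' : Fin m → ℝ),
      ℓ β' γ' = ℓ β γ + gβ β γ ⬝ᵥ (β' - β) + gγ β γ ⬝ᵥ (γ' - γ) +
        (1 / 2) * ((Sum.elim (β' - β) (γ' - γ)) ⬝ᵥ H.mulVec (Sum.elim (β' - β) (γ' - γ))))
    (κ α : ℝ) (hκ : 0 < κ) (hα : 0 < α) (hstep : κ * α * matOpNorm H ≤ 2)
    (β : ℕ → Fin p → ℝ) (γ : ℕ → Fin m → ℝ) (ρ : ℕ → Fin m → ℝ)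
    (hβ : ∀ k, β (k + 1) = β k - (κ * α) • gβ (β k) (γ k))
    (hγ : ∀ k j, ρ (k + 1) j + γ (k + 1) j / κ = ρ k j + γ k j / κ - α * gγ (β k) (γ k) j)
    (hρ : ∀ k, IsL1Subgradient (ρ k) (γ k)) :
    ∀ k, ℓ (β (k + 1)) (γ (k + 1)) ≤ ℓ (β k) (γ k) :=
  splitLBI_loss_nonincreasing_general ℓ gβ gγ H hquad κ α hκ hα hstep β γ ρ hβ hγ hρ
end
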